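/- The rule (ex-middle) (from ∼α,Γ⇒γ and α,Γ⇒γ infer Γ⇒γ) with arbitrary formulas α is derivable from its atomic restriction (at-ex-middle), where α is a propositional variable, over the base calculus sC with cut: if every instance of (at-ex-middle) is available, then every instance of (ex-middle) is admissible. -/

import Mathlib

inductive Fm : Type
  | var : ℕ → Fm
  | conj : Fm → Fm → Fm
  | disj : Fm → Fm → Fm
  | impl : Fm → Fm → Fm
  | neg : Fm → Fm
  deriving DecidableEq

open Fm

/-- Optional rules: cut, (ex-middle), (Peirce), (g-ex-middle), (at-ex-middle). -/
structure Rules where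
  cut : Bool := false
  exMid : Bool := false
  peirce : Bool := false
  gem : Bool := false
  atEx : Bool := false

/-- The sequent calculus sC for Wansing's connexive logic C, with optional extra rules. -/
inductive SC (R : Rules) : Finset Fm → Fm → Prop
  | init1 (p : ℕ) (Γ : Finset Fm) : SC R (insert (var p) Γ) (var p)
  | init2 (p : ℕ) (Γ : Finset Fm) : SC R (insert (neg (var p)) Γ) (neg (var p))
  | cut {Γ Δ : Finset Fm} {a c : Fm} : R.cut = true →
      SC R Γ a → SC R (insert a Δ) c → SC R (Γ ∪ Δ) c
  | implL {Γ Δ : Finset Fm} {a b c : Fm} :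
      SC R Γ a → SC R (insert b Δ) c → SC R (insert (impl a b) (Γ ∪ Δ)) c
  | implR {Γ : Finset Fm} {a b : Fm} :
      SC R (insert a Γ) b → SC R Γ (impl a b)
  | conjL {Γ : Finset Fm} {a b c : Fm} :
      SC R (insert a (insert b Γ)) c → SC R (insert (conj a b) Γ) c
  | conjR {Γ : Finset Fm} {a b : Fm} :
      SC R Γ a → SC R Γ b → SC R Γ (conj a b)
  | disjL {Γ : Finset Fm} {a b c : Fm} :
      SC R (insert a Γ) c → SC R (insert b Γ) c → SC R (insert (disj a b) Γ) c
  | disjR1 {Γ : Finset Fm} {a b : Fm} : SC R Γ a → SC R Γ (disj a b)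
  | disjR2 {Γ : Finset Fm} {a b : Fm} : SC R Γ b → SC R Γ (disj a b)
  | negnegL {Γ : Finset Fm} {a c : Fm} :
      SC R (insert a Γ) c → SC R (insert (neg (neg a)) Γ) c
  | negnegR {Γ : Finset Fm} {a : Fm} : SC R Γ a → SC R Γ (neg (neg a))
  | negimplL {Γ Δ : Finset Fm} {a b c : Fm} :
      SC R Γ a → SC R (insert (neg b) Δ) c → SC R (insert (neg (impl a b)) (Γ ∪ Δ)) c
  | negimplR {Γ : Finset Fm} {a b : Fm} :
      SC R (insert a Γ) (neg b) → SC R Γ (neg (impl a b))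
  | negconjL {Γ : Finset Fm} {a b c : Fm} :
      SC R (insert (neg a) Γ) c → SC R (insert (neg b) Γ) c →
      SC R (insert (neg (conj a b)) Γ) c
  | negconjR1 {Γ : Finset Fm} {a b : Fm} : SC R Γ (neg a) → SC R Γ (neg (conj a b))
  | negconjR2 {Γ : Finset Fm} {a b : Fm} : SC R Γ (neg b) → SC R Γ (neg (conj a b))
  | negdisjL {Γ : Finset Fm} {a b c : Fm} :
      SC R (insert (neg a) (insert (neg b) Γ)) c → SC R (insert (neg (disj a b)) Γ) c
  | negdisjR {Γ : Finset Fm} {a b : Fm} :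
      SC R Γ (neg a) → SC R Γ (neg b) → SC R Γ (neg (disj a b))
  | exMid {Γ : Finset Fm} {a c : Fm} : R.exMid = true →
      SC R (insert (neg a) Γ) c → SC R (insert a Γ) c → SC R Γ c
  | peirce {Γ : Finset Fm} {a b : Fm} : R.peirce = true →
      SC R (insert (impl a b) Γ) a → SC R Γ a
  | gem {Γ : Finset Fm} {a b c : Fm} : R.gem = true →
      SC R (insert (impl a b) Γ) c → SC R (insert a Γ) c → SC R Γ c
  | atEx {Γ : Finset Fm} {p : ℕ} {c : Fm} : R.atEx = true →
      SC R (insert (neg (var p)) Γ) c → SC R (insert (var p) Γ) c → SC R Γ c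

/-- sC (with cut). -/
def sC : Rules := { cut := true }
/-- cut-free sC. -/
def sCcf : Rules := {}
/-- sC3 = sC + (ex-middle). -/
def sC3 : Rules := { cut := true, exMid := true }
/-- sMC = sC + (Peirce). -/
def sMC : Rules := { cut := true, peirce := true }
/-- sMC* = sC + (g-ex-middle). -/
def sMCstar : Rules := { cut := true, gem := true }

/-!
Induction on α, replacing α and ∼α by their components through cuts against derivable
sequents: b ⇒ a→b and ∼b ⇒ ∼(a→b), b ⇒ ∼∼b, a,b ⇒ a∧b with ∼a ⇒ ∼(a∧b) and ∼b ⇒ ∼(a∧b),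
and dually for ∨. For ∧ and ∨ the induction hypothesis is used twice: first for b in the
context a,Γ (resp. ∼a,Γ), then for a in Γ; for → only the consequent b is needed.
-/

namespace SC

variable {R : Rules} {Γ Δ : Finset Fm} {a b c : Fm}

theorem of_insert_of_mem (ha : a ∈ Γ) (h : SC R (insert a Γ) c) : SC R Γ c :=
  Finset.insert_eq_of_mem ha ▸ h

theorem mono (h : SC R Γ c) (hΓ : Γ ⊆ Δ) : SC R Δ c := by
  induction h generalizing Δ with
  | init1 p Γ => exact of_insert_of_mem (hΓ (Finset.mem_insert_self _ _)) (init1 p Δ)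
  | init2 p Γ => exact of_insert_of_mem (hΓ (Finset.mem_insert_self _ _)) (init2 p Δ)
  | cut hR _ _ ih₁ ih₂ =>
    rw [Finset.union_subset_iff] at hΓ
    exact Finset.union_self Δ ▸ cut hR (ih₁ hΓ.1) (ih₂ (Finset.insert_subset_insert _ hΓ.2))
  | implL _ _ ih₁ ih₂ =>
    rw [Finset.insert_subset_iff, Finset.union_subset_iff] at hΓ
    exact of_insert_of_mem hΓ.1 <|
      Finset.union_self Δ ▸ implL (ih₁ hΓ.2.1) (ih₂ (Finset.insert_subset_insert _ hΓ.2.2))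
  | implR _ ih => exact implR (ih (Finset.insert_subset_insert _ hΓ))
  | conjL _ ih =>
    rw [Finset.insert_subset_iff] at hΓ
    exact of_insert_of_mem hΓ.1 <|
      conjL (ih (Finset.insert_subset_insert _ (Finset.insert_subset_insert _ hΓ.2)))
  | conjR _ _ ih₁ ih₂ => exact conjR (ih₁ hΓ) (ih₂ hΓ)
  | disjL _ _ ih₁ ih₂ =>
    rw [Finset.insert_subset_iff] at hΓ
    exact of_insert_of_mem hΓ.1 <|
      disjL (ih₁ (Finset.insert_subset_insert _ hΓ.2)) (ih₂ (Finset.insert_subset_insert _ hΓ.2))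
  | disjR1 _ ih => exact disjR1 (ih hΓ)
  | disjR2 _ ih => exact disjR2 (ih hΓ)
  | negnegL _ ih =>
    rw [Finset.insert_subset_iff] at hΓ
    exact of_insert_of_mem hΓ.1 (negnegL (ih (Finset.insert_subset_insert _ hΓ.2)))
  | negnegR _ ih => exact negnegR (ih hΓ)
  | negimplL _ _ ih₁ ih₂ =>
    rw [Finset.insert_subset_iff, Finset.union_subset_iff] at hΓ
    exact of_insert_of_mem hΓ.1 <|
      Finset.union_self Δ ▸ negimplL (ih₁ hΓ.2.1) (ih₂ (Finset.insert_subset_insert _ hΓ.2.2))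
  | negimplR _ ih => exact negimplR (ih (Finset.insert_subset_insert _ hΓ))
  | negconjL _ _ ih₁ ih₂ =>
    rw [Finset.insert_subset_iff] at hΓ
    exact of_insert_of_mem hΓ.1 <|
      negconjL (ih₁ (Finset.insert_subset_insert _ hΓ.2)) (ih₂ (Finset.insert_subset_insert _ hΓ.2))
  | negconjR1 _ ih => exact negconjR1 (ih hΓ)
  | negconjR2 _ ih => exact negconjR2 (ih hΓ)
  | negdisjL _ ih =>
    rw [Finset.insert_subset_iff] at hΓ
    exact of_insert_of_mem hΓ.1 <|
      negdisjL (ih (Finset.insert_subset_insert _ (Finset.insert_subset_insert _ hΓ.2)))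
  | negdisjR _ _ ih₁ ih₂ => exact negdisjR (ih₁ hΓ) (ih₂ hΓ)
  | exMid hR _ _ ih₁ ih₂ =>
    exact exMid hR (ih₁ (Finset.insert_subset_insert _ hΓ)) (ih₂ (Finset.insert_subset_insert _ hΓ))
  | peirce hR _ ih => exact peirce hR (ih (Finset.insert_subset_insert _ hΓ))
  | gem hR _ _ ih₁ ih₂ =>
    exact gem hR (ih₁ (Finset.insert_subset_insert _ hΓ)) (ih₂ (Finset.insert_subset_insert _ hΓ))
  | atEx hR _ _ ih₁ ih₂ =>
    exact atEx hR (ih₁ (Finset.insert_subset_insert _ hΓ)) (ih₂ (Finset.insert_subset_insert _ hΓ))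

theorem id_and_neg_id (a : Fm) (Γ : Finset Fm) :
    SC R (insert a Γ) a ∧ SC R (insert (neg a) Γ) (neg a) := by
  induction a generalizing Γ with
  | var p => exact ⟨init1 p Γ, init2 p Γ⟩
  | conj a b iha ihb =>
    refine ⟨conjL (conjR (iha _).1 ?_), negconjL (negconjR1 (iha _).2) (negconjR2 (ihb _).2)⟩
    exact Finset.insert_comm a b Γ ▸ (ihb _).1
  | disj a b iha ihb =>
    refine ⟨disjL (disjR1 (iha _).1) (disjR2 (ihb _).1), negdisjL (negdisjR (iha _).2 ?_)⟩
    exact Finset.insert_comm (neg a) (neg b) Γ ▸ (ihb _).2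
  | impl a b iha ihb =>
    have hab : insert a Γ ∪ Γ = insert a Γ := by
      rw [Finset.insert_union, Finset.union_self]
    refine ⟨implR ?_, negimplR ?_⟩ <;> rw [Finset.insert_comm, ← hab]
    exacts [implL (iha Γ).1 (ihb Γ).1, negimplL (iha Γ).1 (ihb Γ).2]
  | neg a iha => exact ⟨(iha Γ).2, negnegL (negnegR (iha Γ).1)⟩

theorem of_mem (ha : a ∈ Γ) : SC R Γ a :=
  of_insert_of_mem ha (id_and_neg_id a Γ).1

theorem neg_of_mem (ha : neg a ∈ Γ) : SC R Γ (neg a) :=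
  of_insert_of_mem ha (id_and_neg_id a Γ).2

theorem cut_self (hR : R.cut = true) (h₁ : SC R Γ a) (h₂ : SC R (insert a Γ) c) : SC R Γ c :=
  Finset.union_self Γ ▸ cut hR h₁ h₂

theorem replace_hyp (hR : R.cut = true) (hab : SC R (insert a Γ) b) (h : SC R (insert b Γ) c) :
    SC R (insert a Γ) c :=
  cut_self hR hab (h.mono (Finset.insert_subset_insert _ (Finset.subset_insert _ _)))

theorem exMid_of_atEx (hR : R.cut = true) (hA : R.atEx = true) (a : Fm) {Γ : Finset Fm} {c : Fm}
    (hn : SC R (insert (neg a) Γ) c) (hp : SC R (insert a Γ) c) : SC R Γ c := by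
  induction a generalizing Γ with
  | var p => exact atEx hA hn hp
  | neg b ihb => exact ihb hp (replace_hyp hR (negnegR (of_mem (by simp))) hn)
  | conj a b iha ihb =>
    have hna : SC R (insert (neg a) Γ) c := replace_hyp hR (negconjR1 (neg_of_mem (by simp))) hn
    have hnb : SC R (insert (neg b) Γ) c := replace_hyp hR (negconjR2 (neg_of_mem (by simp))) hn
    have hab : SC R (insert b (insert a Γ)) c :=
      replace_hyp hR (conjR (of_mem (by simp)) (of_mem (by simp)))
        (hp.mono (Finset.insert_subset_insert _ (Finset.subset_insert _ _)))
    exact iha hna (ihb (hnb.mono (Finset.insert_subset_insert _ (Finset.subset_insert _ _))) hab)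
  | disj a b iha ihb =>
    have ha : SC R (insert a Γ) c := replace_hyp hR (disjR1 (of_mem (by simp))) hp
    have hb : SC R (insert b Γ) c := replace_hyp hR (disjR2 (of_mem (by simp))) hp
    have hnab : SC R (insert (neg b) (insert (neg a) Γ)) c :=
      replace_hyp hR (negdisjR (neg_of_mem (by simp)) (neg_of_mem (by simp)))
        (hn.mono (Finset.insert_subset_insert _ (Finset.subset_insert _ _)))
    exact iha (ihb hnab (hb.mono (Finset.insert_subset_insert _ (Finset.subset_insert _ _)))) ha
  | impl a b _ ihb =>
    exact ihb (replace_hyp hR (negimplR (neg_of_mem (by simp))) hn)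
      (replace_hyp hR (implR (of_mem (by simp))) hp)

end SC

/-- (ex-middle) is admissible given only its atomic restriction:
sC + cut + (at-ex-middle) proves every sequent provable in sC + cut + (ex-middle). -/
theorem stmt16 (Γ : Finset Fm) (γ : Fm)
    (h : SC { cut := true, exMid := true } Γ γ) :
    SC { cut := true, atEx := true } Γ γ := by
  induction h with
  | init1 p Γ => exact SC.init1 p Γ
  | init2 p Γ => exact SC.init2 p Γ
  | cut _ _ _ ih₁ ih₂ => exact SC.cut rfl ih₁ ih₂
  | implL _ _ ih₁ ih₂ => exact SC.implL ih₁ ih₂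
  | implR _ ih => exact SC.implR ih
  | conjL _ ih => exact SC.conjL ih
  | conjR _ _ ih₁ ih₂ => exact SC.conjR ih₁ ih₂
  | disjL _ _ ih₁ ih₂ => exact SC.disjL ih₁ ih₂
  | disjR1 _ ih => exact SC.disjR1 ih
  | disjR2 _ ih => exact SC.disjR2 ih
  | negnegL _ ih => exact SC.negnegL ih
  | negnegR _ ih => exact SC.negnegR ih
  | negimplL _ _ ih₁ ih₂ => exact SC.negimplL ih₁ ih₂
  | negimplR _ ih => exact SC.negimplR ih
  | negconjL _ _ ih₁ ih₂ => exact SC.negconjL ih₁ ih₂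
  | negconjR1 _ ih => exact SC.negconjR1 ih
  | negconjR2 _ ih => exact SC.negconjR2 ih
  | negdisjL _ ih => exact SC.negdisjL ih
  | negdisjR _ _ ih₁ ih₂ => exact SC.negdisjR ih₁ ih₂
  | exMid _ _ _ ih₁ ih₂ => exact SC.exMid_of_atEx rfl rfl _ ih₁ ih₂
  | peirce hR | gem hR | atEx hR => exact absurd hR Bool.false_ne_true
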